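/- Disjunction is not strongly definable in atomic System F with primitive disjunction: there is no formula C of the pure second-order language (variables, ⊃, ∀) such that C ⊣⊢ Y∨Z in NI²∨_at, for distinct propositional variables Y, Z. -/

import Mathlib

/-- Formulas of second-order propositional logic with primitive disjunction:
variables, ⊃, ∨, ∀. -/
inductive Fm : Type
  | var : ℕ → Fm
  | imp : Fm → Fm → Fm
  | or  : Fm → Fm → Fm
  | all : ℕ → Fm → Fm
deriving DecidableEq

namespace Fm

/-- `Free X A`: the variable `X` occurs free in `A`. -/
def Free (X : ℕ) : Fm → Prop
  | var Y => X = Y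
  | imp A B => Free X A ∨ Free X B
  | or A B => Free X A ∨ Free X B
  | all Y A => X ≠ Y ∧ Free X A

/-- Substitution of `C` for the free occurrences of `X`. -/
def subst (X : ℕ) (C : Fm) : Fm → Fm
  | var Y => if X = Y then C else var Y
  | imp A B => imp (subst X C A) (subst X C B)
  | or A B => or (subst X C A) (subst X C B)
  | all Y A => if X = Y then all Y A else all Y (subst X C A)

/-- `C` is substitutable (free) for `X` in the given formula (no capture). -/
def FreeFor (C : Fm) (X : ℕ) : Fm → Prop
  | var _ => True
  | imp A B => FreeFor C X A ∧ FreeFor C X B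
  | or A B => FreeFor C X A ∧ FreeFor C X B
  | all Y A => (¬ Free X (all Y A)) ∨ (¬ Free Y C ∧ FreeFor C X A)

end Fm

/-- Natural deduction for second-order propositional logic with primitive
disjunction (the system `NI²∨`).  When `atomic = true` the witness of
∀-elimination must be a variable: this is the system `NI²∨_at`. -/
inductive Deriv (atomic : Bool) : Set Fm → Fm → Prop
  | ax {Γ A} : A ∈ Γ → Deriv atomic Γ A
  | impI {Γ A B} : Deriv atomic (insert A Γ) B → Deriv atomic Γ (.imp A B)
  | impE {Γ A B} : Deriv atomic Γ (.imp A B) → Deriv atomic Γ A → Deriv atomic Γ B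
  | orI1 {Γ A B} : Deriv atomic Γ A → Deriv atomic Γ (.or A B)
  | orI2 {Γ A B} : Deriv atomic Γ B → Deriv atomic Γ (.or A B)
  | orE {Γ A B C} : Deriv atomic Γ (.or A B) →
      Deriv atomic (insert A Γ) C → Deriv atomic (insert B Γ) C →
      Deriv atomic Γ C
  | allI {Γ X A} : Deriv atomic Γ A → (∀ B ∈ Γ, ¬ Fm.Free X B) →
      Deriv atomic Γ (.all X A)
  | allE {Γ X A C} : Deriv atomic Γ (.all X A) → Fm.FreeFor C X A →
      (atomic = true → ∃ Y, C = Fm.var Y) →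
      Deriv atomic Γ (Fm.subst X C A)

/-- Disjunction-free formulas (formulas of the pure second-order language). -/
def OrFree : Fm → Prop
  | .var _ => True
  | .imp A B => OrFree A ∧ OrFree B
  | .or _ _ => False
  | .all _ A => OrFree A

/-!
Interpret formulas in a complete Heyting algebra, letting propositional variables and the
quantifier `∀X` range only over a fixed set `S` of values. Because ∀-elimination only
instantiates variables, `NI²∨_at` is sound for this semantics whatever `S` is. Take `S` to be
the regular elements (`xᶜᶜ = x`): they are closed under `⇨` and arbitrary meets, so every
∨-free formula denotes a regular element, whereas a join of regular elements need not be
regular. In the regular open sets `(-∞, 0)` and `(0, ∞)` of `ℝ` the join is `ℝ ∖ {0}`, whose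
double complement is `ℝ`.
-/

open Function Set TopologicalSpace

theorem Heyting.IsRegular.iInf {α : Type*} [Order.Frame α] {ι : Sort*} {f : ι → α}
    (hf : ∀ i, Heyting.IsRegular (f i)) : Heyting.IsRegular (⨅ i, f i) :=
  le_antisymm (le_iInf fun i => (hf i).eq ▸ compl_le_compl (compl_le_compl (iInf_le f i)))
    le_compl_compl

theorem Function.forall_update_mem {α β : Type*} [DecidableEq α] {S : Set β} {ρ : α → β}
    (hρ : ∀ x, ρ x ∈ S) {a : α} {s : β} (hs : s ∈ S) : ∀ x, update ρ a s x ∈ S :=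
  (forall_update_iff ρ fun _ t => t ∈ S).2 ⟨hs, fun x _ => hρ x⟩

namespace Fm

theorem subst_of_not_free {X : ℕ} {C : Fm} : ∀ {A : Fm}, ¬ Free X A → subst X C A = A
  | var n, h => if_neg h
  | imp A B, h => by
    rw [Free, not_or] at h
    rw [subst, subst_of_not_free h.1, subst_of_not_free h.2]
  | or A B, h => by
    rw [Free, not_or] at h
    rw [subst, subst_of_not_free h.1, subst_of_not_free h.2]
  | all Y A, h => by
    by_cases hXY : X = Y
    · rw [subst, if_pos hXY]
    · rw [subst, if_neg hXY, subst_of_not_free fun hA => h ⟨hXY, hA⟩]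

variable {H : Type*} [Order.Frame H] (S : Set H)

def eval (ρ : ℕ → H) : Fm → H
  | var n => ρ n
  | imp A B => eval ρ A ⇨ eval ρ B
  | or A B => eval ρ A ⊔ eval ρ B
  | all X A => ⨅ s ∈ S, eval (update ρ X s) A

variable {S}

theorem eval_congr : ∀ {A : Fm} {ρ ρ' : ℕ → H}, (∀ n, Free n A → ρ n = ρ' n) →
    eval S ρ A = eval S ρ' A
  | var n, _, _, h => h n rfl
  | imp A B, _, _, h => by
    rw [eval, eval, eval_congr fun n hn => h n (.inl hn), eval_congr fun n hn => h n (.inr hn)]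
  | or A B, _, _, h => by
    rw [eval, eval, eval_congr fun n hn => h n (.inl hn), eval_congr fun n hn => h n (.inr hn)]
  | all X A, ρ, ρ', h => by
    refine biInf_congr fun s _ => eval_congr fun n hn => ?_
    rcases eq_or_ne n X with rfl | hnX
    · rw [update_self, update_self]
    · rw [update_of_ne hnX, update_of_ne hnX, h n ⟨hnX, hn⟩]

theorem eval_update_of_not_free {A : Fm} {X : ℕ} (hX : ¬ Free X A) (ρ : ℕ → H) (s : H) :
    eval S (update ρ X s) A = eval S ρ A :=
  eval_congr fun _ hn => update_of_ne (fun h : _ = X => hX (h ▸ hn)) _ _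

theorem eval_subst_var {X Y : ℕ} : ∀ {A : Fm} (ρ : ℕ → H), FreeFor (var Y) X A →
    eval S ρ (subst X (var Y) A) = eval S (update ρ X (ρ Y)) A
  | var n, ρ, _ => by
    rcases eq_or_ne X n with rfl | hXn
    · simp only [subst, if_pos, eval, update_self]
    · simp only [subst, if_neg hXn, eval, update_of_ne (Ne.symm hXn)]
  | imp A B, ρ, h => by rw [subst, eval, eval, eval_subst_var ρ h.1, eval_subst_var ρ h.2]
  | or A B, ρ, h => by rw [subst, eval, eval, eval_subst_var ρ h.1, eval_subst_var ρ h.2]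
  | all W A, ρ, h => by
    rcases eq_or_ne X W with rfl | hXW
    · simp only [subst, if_pos, eval, update_idem]
    rw [subst, if_neg hXW]
    rcases h with hX | ⟨hYW, h⟩
    · rw [subst_of_not_free fun hA => hX ⟨hXW, hA⟩, eval_update_of_not_free hX]
    · refine biInf_congr fun s _ => ?_
      rw [eval_subst_var _ h, update_of_ne (Ne.symm hYW), update_comm hXW]

theorem OrFree.isRegular_eval (hS : ∀ s ∈ S, Heyting.IsRegular s) :
    ∀ {A : Fm}, OrFree A → ∀ {ρ : ℕ → H}, (∀ n, ρ n ∈ S) → Heyting.IsRegular (eval S ρ A)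
  | var n, _, _, hρ => hS _ (hρ n)
  | imp _ _, hA, _, hρ => (isRegular_eval hS hA.1 hρ).himp (isRegular_eval hS hA.2 hρ)
  | or _ _, hA, _, _ => (hA : False).elim
  | all _ A, hA, _, hρ => Heyting.IsRegular.iInf fun _ => Heyting.IsRegular.iInf fun hs =>
    isRegular_eval hS (A := A) hA (forall_update_mem hρ hs)

end Fm

open Fm

theorem Deriv.sound {H : Type*} [Order.Frame H] {S : Set H} {Γ : Set Fm} {A : Fm}
    (h : Deriv true Γ A) {ρ : ℕ → H} (hρ : ∀ n, ρ n ∈ S) :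
    ⨅ G ∈ Γ, eval S ρ G ≤ eval S ρ A := by
  induction h generalizing ρ with
  | ax hA => exact biInf_le _ hA
  | impI _ ih =>
    have ih := ih hρ
    rw [iInf_insert, inf_comm] at ih
    exact le_himp_iff.2 ih
  | impE _ _ ih₁ ih₂ => exact (le_himp_iff.1 (ih₁ hρ)).trans' (le_inf le_rfl (ih₂ hρ))
  | orI1 _ ih => exact (ih hρ).trans le_sup_left
  | orI2 _ ih => exact (ih hρ).trans le_sup_right
  | orE _ _ _ ih ihA ihB =>
    have ihA := ihA hρ
    have ihB := ihB hρ
    rw [iInf_insert, inf_comm] at ihA ihB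
    calc _ ≤ (⨅ G ∈ _, eval S ρ G) ⊓ (eval S ρ _ ⊔ eval S ρ _) := le_inf le_rfl (ih hρ)
      _ = _ := inf_sup_left _ _ _
      _ ≤ _ := sup_le ihA ihB
  | @allI Γ X A _ hX ih =>
    refine le_iInf₂ fun s hs => ?_
    calc ⨅ G ∈ Γ, eval S ρ G = ⨅ G ∈ Γ, eval S (update ρ X s) G :=
          biInf_congr fun G hG => (eval_update_of_not_free (hX G hG) ρ s).symm
      _ ≤ _ := ih (forall_update_mem hρ hs)
  | allE _ hfree hatom ih =>
    obtain ⟨W, rfl⟩ := hatom rfl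
    rw [eval_subst_var ρ hfree]
    exact (ih hρ).trans (biInf_le _ (hρ W))

namespace TopologicalSpace.Opens

theorem compl_Iio (a : ℝ) : (⟨Iio a, isOpen_Iio⟩ : Opens ℝ)ᶜ = ⟨Ioi a, isOpen_Ioi⟩ :=
  Opens.ext <| by
    rw [coe_compl_eq_interior_compl]
    exact (congrArg interior Set.compl_Iio).trans interior_Ici

theorem compl_Ioi (a : ℝ) : (⟨Ioi a, isOpen_Ioi⟩ : Opens ℝ)ᶜ = ⟨Iio a, isOpen_Iio⟩ :=
  Opens.ext <| by
    rw [coe_compl_eq_interior_compl]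
    exact (congrArg interior Set.compl_Ioi).trans interior_Iic

theorem isRegular_Iio (a : ℝ) : Heyting.IsRegular (⟨Iio a, isOpen_Iio⟩ : Opens ℝ) := by
  rw [Heyting.IsRegular, compl_Iio, compl_Ioi]

theorem isRegular_Ioi (a : ℝ) : Heyting.IsRegular (⟨Ioi a, isOpen_Ioi⟩ : Opens ℝ) := by
  rw [Heyting.IsRegular, compl_Ioi, compl_Iio]

theorem not_isRegular_Iio_sup_Ioi (a : ℝ) :
    ¬ Heyting.IsRegular ((⟨Iio a, isOpen_Iio⟩ : Opens ℝ) ⊔ ⟨Ioi a, isOpen_Ioi⟩) := by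
  intro h
  have hcompl : ((⟨Iio a, isOpen_Iio⟩ : Opens ℝ) ⊔ ⟨Ioi a, isOpen_Ioi⟩)ᶜ = ⊥ := Opens.ext <| by
    rw [coe_compl_eq_interior_compl, coe_sup]
    change interior (Iio a ∪ Ioi a)ᶜ = ∅
    rw [Iio_union_Ioi, _root_.compl_compl, interior_singleton]
  have ha : a ∈ (⊤ : Opens ℝ) := trivial
  rw [← compl_bot, ← hcompl, h.eq] at ha
  simp at ha

end TopologicalSpace.Opens

/-- Disjunction is not strongly definable in atomic System F: there is no
formula `C` of the pure second-order language (no ∨) with `C ⊣⊢ Y∨Z` in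
`NI²∨_at`, for distinct variables `Y`, `Z`. -/
theorem or_not_strongly_definable (Y Z : ℕ) (hYZ : Y ≠ Z) :
    ¬ ∃ C : Fm, OrFree C ∧
        Deriv true {C} (.or (.var Y) (.var Z)) ∧
        Deriv true {.or (.var Y) (.var Z)} C := by
  rintro ⟨C, hC, hCYZ, hYZC⟩
  let S := {x : Opens ℝ | Heyting.IsRegular x}
  let ρ : ℕ → Opens ℝ := fun n => if n = Y then ⟨Iio 0, isOpen_Iio⟩ else ⟨Ioi 0, isOpen_Ioi⟩
  have hρ : ∀ n, ρ n ∈ S := fun n => by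
    by_cases hn : n = Y
    · simp only [ρ, if_pos hn]; exact Opens.isRegular_Iio 0
    · simp only [ρ, if_neg hn]; exact Opens.isRegular_Ioi 0
  have hC_eq : Fm.eval S ρ C = Fm.eval S ρ (.or (.var Y) (.var Z)) :=
    le_antisymm (by simpa using hCYZ.sound hρ) (by simpa using hYZC.sound hρ)
  have hC_regular : Heyting.IsRegular (Fm.eval S ρ C) := hC.isRegular_eval (fun _ hx => hx) hρ
  rw [hC_eq] at hC_regular
  simp only [Fm.eval, ρ, if_pos, if_neg hYZ.symm] at hC_regular
  exact Opens.not_isRegular_Iio_sup_Ioi 0 hC_regular
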